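/- arXiv:2103.09266 — 2 statements merged into one kernel-verified Lean document; each statement's English description precedes it below -/
import Mathlib

section
/- If the natural parameterization r : ℝ → S_X is differentiable at every point of some open set U ⊆ ℝ, then r is continuously differentiable on U. -/
/-!
Write `p t = ρ t • (cos t • e₁ + sin t • e₂)` with `ρ = ‖e^{it}‖⁻¹ > 0`. The curve `p` is
Lipschitz, hence so is the arc length `σ`, and its inverse `τ` is antilipschitz: wherever `τ` is
differentiable its derivative is nonzero. Where `r = p ∘ τ` is differentiable, so is its polar
angle `τ` (locally an arctangent of a quotient of coordinates of `r`); hence `σ`, and with it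
`p = r ∘ σ`, is differentiable at `τ s`.

Where `p` is differentiable, `det (p, p') = ρ²` in the basis `(e₁, e₂)`, and every norming
functional of `p t` kills `p' t`, because `‖p‖ = 1`. If `p' tₙ → w` with `tₙ → t`, a limit of
norming functionals of `p tₙ` norms `p t`, so it kills both `w` and `p' t`; together with
`det (p t, w) = det (p t, p' t)` this forces `w = p' t`. By compactness, `p'` is continuous, so
`σ' = ‖p'‖ > 0` and `r' = ‖p' ∘ τ‖⁻¹ • p' ∘ τ` are continuous.
-/

open Set Filter Topology MeasureTheory
open scoped NNReal

theorem StrictMono.isOpenMap_of_continuous {f : ℝ → ℝ} (hf : StrictMono f) (hc : Continuous f) :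
    IsOpenMap f := by
  intro U hU
  rw [isOpen_iff_mem_nhds]
  rintro _ ⟨s, hs, rfl⟩
  obtain ⟨a, b, hab, hsub⟩ := mem_nhds_iff_exists_Ioo_subset.1 (hU.mem_nhds hs)
  exact mem_of_superset (Ioo_mem_nhds (hf hab.1) (hf hab.2))
    ((intermediate_value_Ioo (hab.1.trans hab.2).le hc.continuousOn).trans (image_mono hsub))

theorem HasDerivAt.ne_zero_of_antilipschitzWith {E : Type*} [NormedAddCommGroup E]
    [NormedSpace ℝ E] {f : ℝ → E} {f' : E} {x : ℝ} {K : ℝ≥0} (hf : HasDerivAt f f' x)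
    (hK : AntilipschitzWith K f) : f' ≠ 0 := by
  have hslope : ∀ᶠ t in 𝓝[≠] x, 1 ≤ K * ‖slope f x t‖ := by
    filter_upwards [self_mem_nhdsWithin] with t ht
    have ht : 0 < ‖t - x‖ := norm_pos_iff.2 (sub_ne_zero.2 ht)
    rw [slope_def_module, norm_smul, norm_inv, ← mul_assoc, mul_comm (K : ℝ), mul_assoc,
      one_le_inv_mul₀ ht, ← dist_eq_norm, ← dist_eq_norm]
    exact hK.le_mul_dist t x
  have hlim := (hasDerivAt_iff_tendsto_slope.1 hf).norm.const_mul (K : ℝ)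
  intro h0
  exact absurd (ge_of_tendsto hlim hslope) (by simp [h0])

theorem DifferentiableAt.of_comp_of_leftInverse {E : Type*} [NormedAddCommGroup E]
    [NormedSpace ℝ E] {p : ℝ → E} {σ τ : ℝ → ℝ} {K : ℝ≥0} {s : ℝ}
    (hp : DifferentiableAt ℝ (p ∘ τ) s) (hτ : DifferentiableAt ℝ τ s) (hσ : LipschitzWith K σ)
    (hστ : Function.LeftInverse σ τ) (hτo : IsOpenMap τ) : DifferentiableAt ℝ p (τ s) := by
  have hτσ : ∀ᶠ y in 𝓝 (τ s), τ (σ y) = y :=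
    mem_of_superset (hτo.isOpen_range.mem_nhds (mem_range_self s)) (by
      rintro _ ⟨x, rfl⟩
      exact congrArg τ (hστ x))
  have hσ' : HasDerivAt σ (deriv τ s)⁻¹ (τ s) :=
    HasDerivAt.of_local_left_inverse hσ.continuous.continuousAt
      (by rw [hστ s]; exact hτ.hasDerivAt)
      (hτ.hasDerivAt.ne_zero_of_antilipschitzWith (hσ.to_rightInverse hστ)) hτσ
  rw [← hστ s] at hp
  exact (hp.comp (τ s) hσ'.differentiableAt).congr_of_eventuallyEq
    (hτσ.mono fun y hy => by simp [hy])

theorem differentiableAt_of_polar {ρ θ : ℝ → ℝ} {s : ℝ} (hθ : ContinuousAt θ s)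
    (hρ : ∀ t, 0 < ρ t) (hx : DifferentiableAt ℝ (fun t => ρ t * Real.cos (θ t)) s)
    (hy : DifferentiableAt ℝ (fun t => ρ t * Real.sin (θ t)) s) : DifferentiableAt ℝ θ s := by
  have hA : DifferentiableAt ℝ (fun t => ρ t * Real.cos (θ t - θ s)) s := by
    simp_rw [Real.cos_sub, mul_add, ← mul_assoc]
    exact (hx.mul_const _).add (hy.mul_const _)
  have hB : DifferentiableAt ℝ (fun t => ρ t * Real.sin (θ t - θ s)) s := by
    simp_rw [Real.sin_sub, mul_sub, ← mul_assoc]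
    exact (hy.mul_const _).sub (hx.mul_const _)
  have hA0 : ρ s * Real.cos (θ s - θ s) ≠ 0 := by simp [(hρ s).ne']
  have hnear : ∀ᶠ t in 𝓝 s, θ t - θ s ∈ Ioo (-(Real.pi / 2)) (Real.pi / 2) :=
    (hθ.sub continuousAt_const).eventually_mem
      (Ioo_mem_nhds (by simp [Real.pi_pos]) (by simp [Real.pi_pos]))
  refine ((differentiableAt_const (θ s)).add (hB.div hA hA0).arctan).congr_of_eventuallyEq ?_
  filter_upwards [hnear] with t ht
  change θ t = θ s + Real.arctan (ρ t * Real.sin (θ t - θ s) / (ρ t * Real.cos (θ t - θ s)))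
  rw [mul_div_mul_left _ _ (hρ t).ne', ← Real.tan_eq_sin_div_cos, Real.arctan_tan ht.1 ht.2]
  ring

theorem Function.Periodic.exists_pos_le_nnnorm {E : Type*} [NormedAddCommGroup E] {f : ℝ → E}
    {c : ℝ} (hf : Function.Periodic f c) (hc : c ≠ 0) (hcont : Continuous f) (h0 : ∀ t, f t ≠ 0) :
    ∃ m : ℝ≥0, 0 < m ∧ ∀ t, m ≤ ‖f t‖₊ := by
  obtain ⟨_, ⟨t₀, rfl⟩, hmin⟩ := (hf.compact_of_continuous hc hcont).exists_isMinOn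
    (range_nonempty f) continuous_nnnorm.continuousOn
  exact ⟨‖f t₀‖₊, nnnorm_pos.2 (h0 t₀), fun t => hmin (mem_range_self t)⟩

section Normalize

variable {E : Type*} [NormedAddCommGroup E] [NormedSpace ℝ E]

theorem norm_inv_norm_smul_sub_inv_norm_smul_le {x : E} (hx : x ≠ 0) (y : E) :
    ‖‖x‖⁻¹ • x - ‖y‖⁻¹ • y‖ ≤ 2 * ‖x - y‖ / ‖x‖ := by
  have hx' : 0 < ‖x‖ := norm_pos_iff.2 hx
  have hy : |‖x‖⁻¹ - ‖y‖⁻¹| * ‖y‖ ≤ ‖x‖⁻¹ * ‖x - y‖ := by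
    rcases eq_or_ne y 0 with rfl | hy
    · simp only [norm_zero, mul_zero]
      positivity
    have hy' : 0 < ‖y‖ := norm_pos_iff.2 hy
    rw [inv_sub_inv hx'.ne' hy'.ne', abs_div, abs_of_pos (mul_pos hx' hy'), div_mul_eq_mul_div,
      mul_div_mul_right _ _ hy'.ne', inv_mul_eq_div, abs_sub_comm]
    exact div_le_div_of_nonneg_right (abs_norm_sub_norm_le x y) hx'.le
  calc ‖‖x‖⁻¹ • x - ‖y‖⁻¹ • y‖ = ‖‖x‖⁻¹ • (x - y) + (‖x‖⁻¹ - ‖y‖⁻¹) • y‖ := by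
        congr 1; module
    _ ≤ ‖x‖⁻¹ * ‖x - y‖ + |‖x‖⁻¹ - ‖y‖⁻¹| * ‖y‖ := by
        refine (norm_add_le _ _).trans_eq ?_
        rw [norm_smul, norm_smul, norm_inv, norm_norm, Real.norm_eq_abs]
    _ ≤ 2 * ‖x - y‖ / ‖x‖ := by
        rw [mul_div_assoc, ← inv_mul_eq_div]
        linarith

theorem LipschitzWith.inv_norm_smul {α : Type*} [PseudoMetricSpace α] {q : α → E} {K m : ℝ≥0}
    (hq : LipschitzWith K q) (hm : 0 < m) (hqm : ∀ t, m ≤ ‖q t‖₊) :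
    LipschitzWith (2 * K / m) fun t => ‖q t‖⁻¹ • q t := by
  refine LipschitzWith.of_dist_le_mul fun s t => ?_
  have hqs : (m : ℝ) ≤ ‖q s‖ := hqm s
  have hq0 : q s ≠ 0 := norm_pos_iff.1 (lt_of_lt_of_le (NNReal.coe_pos.2 hm) hqs)
  rw [dist_eq_norm]
  calc ‖‖q s‖⁻¹ • q s - ‖q t‖⁻¹ • q t‖ ≤ 2 * ‖q s - q t‖ / ‖q s‖ :=
        norm_inv_norm_smul_sub_inv_norm_smul_le hq0 _
    _ ≤ 2 * (K * dist s t) / m := by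
        rw [← dist_eq_norm]
        gcongr
        exact hq.dist_le_mul s t
    _ = ↑(2 * K / m) * dist s t := by push_cast; ring

theorem lipschitzWith_cos_smul_add_sin_smul (e₁ e₂ : E) :
    LipschitzWith (‖e₁‖₊ + ‖e₂‖₊) fun t => Real.cos t • e₁ + Real.sin t • e₂ := by
  refine LipschitzWith.of_dist_le_mul fun s t => ?_
  rw [dist_eq_norm, Real.dist_eq]
  calc ‖Real.cos s • e₁ + Real.sin s • e₂ - (Real.cos t • e₁ + Real.sin t • e₂)‖
      = ‖(Real.cos s - Real.cos t) • e₁ + (Real.sin s - Real.sin t) • e₂‖ := by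
        congr 1; module
    _ ≤ |Real.cos s - Real.cos t| * ‖e₁‖ + |Real.sin s - Real.sin t| * ‖e₂‖ := by
        refine (norm_add_le _ _).trans_eq ?_
        rw [norm_smul, norm_smul, Real.norm_eq_abs, Real.norm_eq_abs]
    _ ≤ |s - t| * ‖e₁‖ + |s - t| * ‖e₂‖ := by
        gcongr ?_ * _ + ?_ * _
        · exact Real.abs_cos_sub_cos_le s t
        · exact Real.abs_sin_sub_sin_le s t
    _ = ↑(‖e₁‖₊ + ‖e₂‖₊) * |s - t| := by push_cast; ring

theorem exists_lipschitzWith_inv_norm_smul_cos_smul_add_sin_smul {e₁ e₂ : E}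
    (h0 : ∀ t, Real.cos t • e₁ + Real.sin t • e₂ ≠ 0) :
    ∃ K, LipschitzWith K fun t =>
      ‖Real.cos t • e₁ + Real.sin t • e₂‖⁻¹ • (Real.cos t • e₁ + Real.sin t • e₂) := by
  have hper : Function.Periodic (fun t => Real.cos t • e₁ + Real.sin t • e₂) (2 * Real.pi) :=
    fun t => by simp only [Real.cos_add_two_pi, Real.sin_add_two_pi]
  obtain ⟨m, hm, hqm⟩ := hper.exists_pos_le_nnnorm Real.two_pi_pos.ne' (by fun_prop) h0
  exact ⟨_, (lipschitzWith_cos_smul_add_sin_smul e₁ e₂).inv_norm_smul hm hqm⟩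

end Normalize

section ArcLength

variable {E : Type*} [NormedAddCommGroup E] [NormedSpace ℝ E]

noncomputable def arcLength (p : ℝ → E) (t : ℝ) : ℝ :=
  ∫ u in (0 : ℝ)..t, ‖derivWithin p (Ici u) u‖

theorem LipschitzWith.norm_derivWithin_Ici_le {f : ℝ → E} {K : ℝ≥0} (hf : LipschitzWith K f)
    (x : ℝ) : ‖derivWithin f (Ici x) x‖ ≤ K := by
  by_cases hd : DifferentiableWithinAt ℝ f (Ici x) x
  · have hlim := (hasDerivWithinAt_iff_tendsto_slope.1 hd.hasDerivWithinAt).norm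
    rw [Ici_sdiff_left] at hlim
    refine le_of_tendsto hlim ?_
    filter_upwards [self_mem_nhdsWithin] with t (ht : x < t)
    have ht : 0 < ‖t - x‖ := norm_pos_iff.2 (sub_ne_zero.2 ht.ne')
    rw [slope_def_module, norm_smul, norm_inv, inv_mul_le_iff₀ ht, ← dist_eq_norm,
      ← dist_eq_norm]
    exact (hf.dist_le_mul t x).trans_eq (mul_comm _ _)
  · simp [derivWithin_zero_of_not_differentiableWithinAt hd]

variable [CompleteSpace E] {p : ℝ → E} {K : ℝ≥0}

theorem LipschitzWith.intervalIntegrable_norm_derivWithin_Ici (hp : LipschitzWith K p)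
    (a b : ℝ) : IntervalIntegrable (fun u => ‖derivWithin p (Ici u) u‖) volume a b := by
  borelize E
  refine (intervalIntegrable_const (c := (K : ℝ))).mono_fun'
    (measurable_derivWithin_Ici p).norm.aestronglyMeasurable (Eventually.of_forall fun u => ?_)
  simpa using hp.norm_derivWithin_Ici_le u

theorem LipschitzWith.arcLength (hp : LipschitzWith K p) : LipschitzWith K (arcLength p) := by
  refine LipschitzWith.of_dist_le_mul fun a b => ?_
  rw [Real.dist_eq, Real.dist_eq, _root_.arcLength, _root_.arcLength,
    intervalIntegral.integral_interval_sub_left (hp.intervalIntegrable_norm_derivWithin_Ici 0 a)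
      (hp.intervalIntegrable_norm_derivWithin_Ici 0 b), ← Real.norm_eq_abs]
  exact intervalIntegral.norm_integral_le_of_norm_le_const fun u _ => by
    simpa using hp.norm_derivWithin_Ici_le u

theorem hasDerivAt_arcLength (hp : LipschitzWith K p) {u : ℝ}
    (hd : ∀ᶠ t in 𝓝 u, DifferentiableAt ℝ p t) (hc : ContinuousAt (deriv p) u) :
    HasDerivAt (arcLength p) ‖deriv p u‖ u := by
  have heq : (fun t => ‖derivWithin p (Ici t) t‖) =ᶠ[𝓝 u] fun t => ‖deriv p t‖ :=
    hd.mono fun t ht => by dsimp only; rw [ht.derivWithin (uniqueDiffWithinAt_Ici t)]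
  borelize E
  have := intervalIntegral.integral_hasDerivAt_right
    (hp.intervalIntegrable_norm_derivWithin_Ici 0 u)
    (measurable_derivWithin_Ici p).norm.stronglyMeasurable.stronglyMeasurableAtFilter
    (hc.norm.congr heq.symm)
  rwa [heq.eq_of_nhds] at this

theorem contDiffOn_comp_of_leftInverse_arcLength {W : Set ℝ} (hp : LipschitzWith K p)
    (hW : IsOpen W) (hd : ∀ u ∈ W, DifferentiableAt ℝ p u) (hc : ContinuousOn (deriv p) W)
    (hp0 : ∀ u ∈ W, deriv p u ≠ 0) {τ : ℝ → ℝ} (hτ : Continuous τ)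
    (hστ : Function.LeftInverse (arcLength p) τ) : ContDiffOn ℝ 1 (p ∘ τ) (τ ⁻¹' W) := by
  have hderiv : ∀ s ∈ τ ⁻¹' W,
      HasDerivAt (p ∘ τ) (‖deriv p (τ s)‖⁻¹ • deriv p (τ s)) s := fun s hs =>
    (hd _ hs).hasDerivAt.scomp s <| HasDerivAt.of_local_left_inverse hτ.continuousAt
      (hasDerivAt_arcLength hp (eventually_of_mem (hW.mem_nhds hs) hd)
        (hc.continuousAt (hW.mem_nhds hs)))
      (norm_ne_zero_iff.2 (hp0 _ hs)) (Eventually.of_forall hστ)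
  have hcont : ContinuousOn (fun u => ‖deriv p u‖⁻¹ • deriv p u) W :=
    (hc.norm.inv₀ fun u hu => norm_ne_zero_iff.2 (hp0 u hu)).smul hc
  have hV : IsOpen (τ ⁻¹' W) := hW.preimage hτ
  rw [contDiffOn_one_iff_derivWithin hV.uniqueDiffOn]
  refine ⟨fun s hs => (hderiv s hs).differentiableAt.differentiableWithinAt, ?_⟩
  exact (hcont.comp hτ.continuousOn (mapsTo_preimage τ W)).congr fun s hs =>
    (derivWithin_of_isOpen hV hs).trans (hderiv s hs).deriv

end ArcLength

theorem Module.Basis.det_fin_two_apply {R M : Type*} [CommRing R] [AddCommGroup M] [Module R M]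
    (b : Module.Basis (Fin 2) R M) (x y : M) :
    b.det ![x, y] = b.repr x 0 * b.repr y 1 - b.repr x 1 * b.repr y 0 := by
  rw [b.det_apply, Matrix.det_fin_two]
  simp only [Module.Basis.toMatrix_apply, Matrix.cons_val_zero, Matrix.cons_val_one]
  ring

theorem Module.Basis.eq_of_det_eq_of_apply_eq {K M : Type*} [Field K] [AddCommGroup M]
    [Module K M] (b : Module.Basis (Fin 2) K M) (g : M →ₗ[K] K) {x v w : M} (hx : g x ≠ 0)
    (hg : g v = g w) (hdet : b.det ![x, v] = b.det ![x, w]) : v = w := by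
  have hcoord : ∀ y, g y = b.repr y 0 * g (b 0) + b.repr y 1 * g (b 1) := fun y => by
    simpa only [Fin.sum_univ_two, map_add, map_smul, smul_eq_mul] using
      congrArg g (b.sum_repr y).symm
  rw [hcoord, hcoord w] at hg
  rw [hcoord] at hx
  rw [b.det_fin_two_apply, b.det_fin_two_apply] at hdet
  refine b.ext_elem <| Fin.forall_fin_two.2 ⟨mul_left_cancel₀ hx ?_, mul_left_cancel₀ hx ?_⟩
  · linear_combination b.repr x 0 * hg - g (b 1) * hdet
  · linear_combination b.repr x 1 * hg + g (b 0) * hdet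

section UnitSphere

variable {X : Type*} [NormedAddCommGroup X] [NormedSpace ℝ X]

theorem Module.Basis.continuous_det_fin_two (b : Module.Basis (Fin 2) ℝ X) :
    Continuous fun z : X × X => b.det ![z.1, z.2] := by
  have := Module.Finite.of_basis b
  have hrepr : ∀ i, Continuous fun x => b.repr x i := fun i =>
    (b.coord i).continuous_of_finiteDimensional
  simp_rw [b.det_fin_two_apply]
  exact (((hrepr 0).comp continuous_fst).mul ((hrepr 1).comp continuous_snd)).sub
    (((hrepr 1).comp continuous_fst).mul ((hrepr 0).comp continuous_snd))

theorem HasDerivAt.apply_eq_zero_of_norm_le_one {f : ℝ → X} {f' : X} {x : ℝ}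
    (hf : HasDerivAt f f' x) (hf1 : ∀ t, ‖f t‖ ≤ 1) {g : StrongDual ℝ X} (hg : ‖g‖ ≤ 1)
    (hgx : g (f x) = 1) : g f' = 0 := by
  refine IsLocalMax.hasDerivAt_eq_zero (Eventually.of_forall fun t => ?_)
    (g.hasFDerivAt.comp_hasDerivAt x hf)
  calc g (f t) ≤ ‖g (f t)‖ := Real.le_norm_self _
    _ ≤ ‖g‖ * ‖f t‖ := g.le_opNorm _
    _ ≤ 1 := mul_le_one₀ hg (norm_nonneg _) (hf1 t)
    _ = g (f x) := hgx.symm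

theorem eq_deriv_of_tendsto_deriv_of_det_eq (b : Module.Basis (Fin 2) ℝ X) {p : ℝ → X}
    (hp : Continuous p) (hp1 : ∀ t, ‖p t‖ = 1) {W : Set ℝ} (hW : IsOpen W)
    (hd : ∀ t ∈ W, DifferentiableAt ℝ p t) {f : ℝ → ℝ} (hf : Continuous f)
    (hdet : ∀ t ∈ W, b.det ![p t, deriv p t] = f t) {u : ℝ} (hu : u ∈ W) {𝒰 : Ultrafilter ℝ}
    (h𝒰 : ↑𝒰 ≤ 𝓝 u) {w : X} (hw : Tendsto (deriv p) 𝒰 (𝓝 w)) : w = deriv p u := by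
  have := Module.Finite.of_basis b
  choose g hg1 hgp using fun t => exists_dual_vector'' ℝ (p t)
  simp only [hp1, RCLike.ofReal_one] at hgp
  obtain ⟨γ, hγ1, hγ⟩ := (isCompact_closedBall (0 : StrongDual ℝ X) 1).ultrafilter_le_nhds
    (𝒰.map g) (le_principal_iff.2 <| Ultrafilter.mem_map.2 <| univ_mem' fun t =>
      mem_closedBall_zero_iff.2 (hg1 t))
  replace hγ : Tendsto g 𝒰 (𝓝 γ) := hγ
  have heval : Continuous fun z : StrongDual ℝ X × X => z.1 z.2 :=
    isBoundedBilinearMap_apply.continuous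
  have hW𝒰 : ∀ᶠ t in (𝒰 : Filter ℝ), t ∈ W := h𝒰 (hW.mem_nhds hu)
  have hpu : Tendsto p 𝒰 (𝓝 (p u)) := hp.continuousAt.tendsto.mono_left h𝒰
  have hγp : γ (p u) = 1 := tendsto_nhds_unique
    ((heval.tendsto (γ, p u)).comp (hγ.prodMk_nhds hpu))
    (tendsto_const_nhds.congr fun t => (hgp t).symm)
  have hγw : γ w = 0 := tendsto_nhds_unique
    ((heval.tendsto (γ, w)).comp (hγ.prodMk_nhds hw))
    (tendsto_const_nhds.congr' <| hW𝒰.mono fun t ht =>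
      ((hd t ht).hasDerivAt.apply_eq_zero_of_norm_le_one (fun s => (hp1 s).le) (hg1 t)
        (hgp t)).symm)
  have hγu : γ (deriv p u) = 0 := (hd u hu).hasDerivAt.apply_eq_zero_of_norm_le_one
    (fun s => (hp1 s).le) (mem_closedBall_zero_iff.1 hγ1) hγp
  have hdetw : b.det ![p u, w] = b.det ![p u, deriv p u] := by
    rw [hdet u hu]
    exact tendsto_nhds_unique
      ((b.continuous_det_fin_two.tendsto (p u, w)).comp (hpu.prodMk_nhds hw))
      (((hf.tendsto u).mono_left h𝒰).congr' <| hW𝒰.mono fun t ht => (hdet t ht).symm)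
  exact b.eq_of_det_eq_of_apply_eq γ (by simp [hγp]) (hγw.trans hγu.symm) hdetw

theorem continuousOn_deriv_of_det_eq (b : Module.Basis (Fin 2) ℝ X) {p : ℝ → X} {K : ℝ≥0}
    (hp : LipschitzWith K p) (hp1 : ∀ t, ‖p t‖ = 1) {W : Set ℝ} (hW : IsOpen W)
    (hd : ∀ t ∈ W, DifferentiableAt ℝ p t) {f : ℝ → ℝ} (hf : Continuous f)
    (hdet : ∀ t ∈ W, b.det ![p t, deriv p t] = f t) : ContinuousOn (deriv p) W := by
  have := Module.Finite.of_basis b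
  refine fun u hu => ContinuousAt.continuousWithinAt <|
    (tendsto_iff_ultrafilter _ _ _).2 fun 𝒰 h𝒰 => ?_
  obtain ⟨w, -, hw⟩ := (isCompact_closedBall (0 : X) K).ultrafilter_le_nhds (𝒰.map (deriv p))
    (le_principal_iff.2 <| Ultrafilter.mem_map.2 <| univ_mem' fun _ =>
      mem_closedBall_zero_iff.2 (norm_deriv_le_of_lipschitz hp))
  rwa [← eq_deriv_of_tendsto_deriv_of_det_eq b hp.continuous hp1 hW hd hf hdet hu h𝒰 hw]

end UnitSphere

section Polar

variable {X : Type*} [NormedAddCommGroup X] [NormedSpace ℝ X] (b : Module.Basis (Fin 2) ℝ X)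
  {p : ℝ → X} {ρ : ℝ → ℝ}

theorem Module.Basis.hasDerivAt_repr {p' : X} {t : ℝ} (hp : HasDerivAt p p' t) (i : Fin 2) :
    HasDerivAt (fun t => b.repr (p t) i) (b.repr p' i) t :=
  have := Module.Finite.of_basis b
  (LinearMap.toContinuousLinearMap (b.coord i)).hasFDerivAt.comp_hasDerivAt t hp

theorem repr_of_polar (hpolar : ∀ t, p t = ρ t • (Real.cos t • b 0 + Real.sin t • b 1))
    (t : ℝ) : b.repr (p t) 0 = ρ t * Real.cos t ∧ b.repr (p t) 1 = ρ t * Real.sin t := by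
  simp [hpolar]

theorem det_eq_sq_of_polar (hpolar : ∀ t, p t = ρ t • (Real.cos t • b 0 + Real.sin t • b 1))
    {t : ℝ} {p' : X} (hp : HasDerivAt p p' t) : b.det ![p t, p'] = ρ t ^ 2 := by
  have hρ : ρ = fun t => b.repr (p t) 0 * Real.cos t + b.repr (p t) 1 * Real.sin t := by
    ext t
    rw [(repr_of_polar b hpolar t).1, (repr_of_polar b hpolar t).2]
    linear_combination -ρ t * Real.sin_sq_add_cos_sq t
  obtain ⟨ρ', hρ'⟩ : ∃ ρ', HasDerivAt ρ ρ' t := by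
    rw [hρ]
    exact ⟨_, ((b.hasDerivAt_repr hp 0).mul (Real.hasDerivAt_cos t)).add
      ((b.hasDerivAt_repr hp 1).mul (Real.hasDerivAt_sin t))⟩
  have h0 := (b.hasDerivAt_repr hp 0).unique <| by
    simpa only [(repr_of_polar b hpolar _).1] using hρ'.fun_mul (Real.hasDerivAt_cos t)
  have h1 := (b.hasDerivAt_repr hp 1).unique <| by
    simpa only [(repr_of_polar b hpolar _).2] using hρ'.fun_mul (Real.hasDerivAt_sin t)
  rw [b.det_fin_two_apply, h0, h1, (repr_of_polar b hpolar t).1, (repr_of_polar b hpolar t).2]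
  linear_combination ρ t ^ 2 * Real.sin_sq_add_cos_sq t

theorem differentiableAt_of_polar_comp
    (hpolar : ∀ t, p t = ρ t • (Real.cos t • b 0 + Real.sin t • b 1)) (hρ : ∀ t, 0 < ρ t)
    {τ : ℝ → ℝ} {s : ℝ} (hτ : ContinuousAt τ s) (hp : DifferentiableAt ℝ (p ∘ τ) s) :
    DifferentiableAt ℝ τ s := by
  refine differentiableAt_of_polar hτ (fun t => hρ (τ t)) ?_ ?_
  · simpa only [Function.comp_apply, (repr_of_polar b hpolar _).1] using
      (b.hasDerivAt_repr hp.hasDerivAt 0).differentiableAt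
  · simpa only [Function.comp_apply, (repr_of_polar b hpolar _).2] using
      (b.hasDerivAt_repr hp.hasDerivAt 1).differentiableAt

theorem Module.Basis.cos_smul_add_sin_smul_ne_zero (t : ℝ) :
    Real.cos t • b 0 + Real.sin t • b 1 ≠ 0 := by
  intro h
  have h0 : Real.cos t = 0 := by simpa using congrArg (fun x => b.repr x 0) h
  have h1 : Real.sin t = 0 := by simpa using congrArg (fun x => b.repr x 1) h
  simpa [h0, h1] using Real.sin_sq_add_cos_sq t

end Polar

theorem natural_parameterization_contDiff_of_differentiable_general
    {X : Type*} [NormedAddCommGroup X] [NormedSpace ℝ X]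
    (hdim : Module.finrank ℝ X = 2)
    (e₁ e₂ : X) (hInd : LinearIndependent ℝ ![e₁, e₂])
    (p : ℝ → X)
    (hp : ∀ t, p t = ‖Real.cos t • e₁ + Real.sin t • e₂‖⁻¹ •
      (Real.cos t • e₁ + Real.sin t • e₂))
    (σ : ℝ → ℝ) (hσ : ∀ t, σ t = ∫ u in (0:ℝ)..t, ‖derivWithin p (Ici u) u‖)
    (τ : ℝ → ℝ) (hτ_cont : Continuous τ) (hτ_mono : StrictMono τ)
    (hστ : ∀ x, σ (τ x) = x)
    (r : ℝ → X) (hr : ∀ s, r s = p (τ s))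
    (U : Set ℝ) (hU : IsOpen U) (hdiff : ∀ s ∈ U, DifferentiableAt ℝ r s) :
    ContDiffOn ℝ 1 r U := by
  obtain ⟨b, rfl, rfl⟩ : ∃ b : Module.Basis (Fin 2) ℝ X, b 0 = e₁ ∧ b 1 = e₂ := by
    have hb := coe_basisOfLinearIndependentOfCardEqFinrank hInd (by simp [hdim])
    exact ⟨_, congrFun hb 0, congrFun hb 1⟩
  have := Module.Finite.of_basis b
  set q : ℝ → X := fun t => Real.cos t • b 0 + Real.sin t • b 1
  have hq0 : ∀ t, q t ≠ 0 := b.cos_smul_add_sin_smul_ne_zero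
  obtain ⟨K, hplip⟩ : ∃ K, LipschitzWith K p :=
    (funext hp : p = _) ▸ exists_lipschitzWith_inv_norm_smul_cos_smul_add_sin_smul hq0
  have hp1 : ∀ t, ‖p t‖ = 1 := fun t => by rw [hp]; exact norm_smul_inv_norm (hq0 t)
  obtain rfl : σ = arcLength p := funext hσ
  obtain rfl : r = p ∘ τ := funext hr
  have hτo := hτ_mono.isOpenMap_of_continuous hτ_cont
  have hpd : ∀ t ∈ τ '' U, DifferentiableAt ℝ p t := by
    rintro _ ⟨s, hs, rfl⟩
    refine (hdiff s hs).of_comp_of_leftInverse ?_ hplip.arcLength hστ hτo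
    exact differentiableAt_of_polar_comp b hp (fun t => inv_pos.2 (norm_pos_iff.2 (hq0 t)))
      hτ_cont.continuousAt (hdiff s hs)
  have hdet : ∀ t ∈ τ '' U, b.det ![p t, deriv p t] = ‖q t‖⁻¹ ^ 2 := fun t ht =>
    det_eq_sq_of_polar b hp (hpd t ht).hasDerivAt
  have hcont := continuousOn_deriv_of_det_eq b hplip hp1 (hτo U hU) hpd
    (((by fun_prop : Continuous q).norm.inv₀ fun t => norm_ne_zero_iff.2 (hq0 t)).pow 2) hdet
  have hp0 : ∀ t ∈ τ '' U, deriv p t ≠ 0 := fun t ht h0 =>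
    hq0 t (by simpa [h0, b.det_fin_two_apply] using (hdet t ht).symm)
  exact (contDiffOn_comp_of_leftInverse_arcLength hplip (hτo U hU) hpd hcont hp0 hτ_cont
    hστ).mono (subset_preimage_image τ U)

/-- If the natural parameterization `r` of the unit sphere of a 2-dimensional real Banach
space is differentiable at every point of an open set `U ⊆ ℝ`, then `r` is continuously
differentiable on `U`. -/
theorem natural_parameterization_contDiff_of_differentiable
    {X : Type*} [NormedAddCommGroup X] [NormedSpace ℝ X] [CompleteSpace X]
    (hdim : Module.finrank ℝ X = 2)
    (e₁ e₂ : X) (hInd : LinearIndependent ℝ ![e₁, e₂])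
    (p : ℝ → X)
    (hp : ∀ t, p t = ‖Real.cos t • e₁ + Real.sin t • e₂‖⁻¹ •
      (Real.cos t • e₁ + Real.sin t • e₂))
    (σ : ℝ → ℝ) (hσ : ∀ t, σ t = ∫ u in (0:ℝ)..t, ‖derivWithin p (Ici u) u‖)
    (τ : ℝ → ℝ) (hτ_cont : Continuous τ) (hτ_mono : StrictMono τ)
    (hστ : ∀ x, σ (τ x) = x)
    (r : ℝ → X) (hr : ∀ s, r s = p (τ s))
    (U : Set ℝ) (hU : IsOpen U) (hdiff : ∀ s ∈ U, DifferentiableAt ℝ r s) :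
    ContDiffOn ℝ 1 r U :=
  natural_parameterization_contDiff_of_differentiable_general hdim e₁ e₂ hInd p hp σ hσ τ hτ_cont
    hτ_mono hστ r hr U hU hdiff
end

section
/- Under the stated assumptions, the jumps j(0) and ĵ(0) are determined by the metric of the sphere: lim_{ε→0⁺} ‖r(ε) − r(0)‖ / ‖\overline{r(ε)} + r(0)‖ = (1 − ĵ(0))/(1 + ĵ(0)) and lim_{ε→0⁺} (‖r(ε) − \overline{r(ε)}‖ − 2)/(2ε) = j(0)/(1 − ĵ(0)). -/
open Metric Set Filter Topology

/-- A point `x` of the unit sphere of `X` is *smooth* if there is a unique continuous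
linear functional `g : X →L[ℝ] ℝ` with `g x = 1 = ‖g‖`. -/
def IsSmoothPoint {X : Type*} [NormedAddCommGroup X] [NormedSpace ℝ X] (x : X) : Prop :=
  ∃! g : X →L[ℝ] ℝ, g x = 1 ∧ ‖g‖ = 1

/-- A real Banach space is *strictly convex* if every convex subset of its unit sphere
contains at most one point. -/
def StrictlyConvexSphere (X : Type*) [NormedAddCommGroup X] [NormedSpace ℝ X] : Prop :=
  ∀ s : Set X, s ⊆ sphere (0 : X) 1 → Convex ℝ s → s.Subsingleton

/-!
Near `t = 0` the polar parameterization is `m ↦ ‖e₁ + m • e₂‖⁻¹ • (e₁ + m • e₂)` composed with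
`tan`. The function `m ↦ ‖e₁ + m • e₂‖` is convex, so its right derivative is right-continuous
and tends to the left derivative from the left; hence `‖p'₊(u)‖` has one-sided limits at `0`,
namely `‖p'₊(0)‖` and `‖p'₋(0)‖`. By the fundamental theorem of calculus these are the one-sided
derivatives of the arclength `σ` at `0`, so `r = p ∘ σ⁻¹` has one-sided derivatives of norm one,
whose `e₂`-coordinates `1 ± ĵ` are positive.

For small `ε > 0`, the intermediate value theorem gives `S ε < 0` such that `r (S ε)` and `r ε`
have opposite `e₂`-coordinates; then `bar (r ε) = -r (S ε)`, and comparing the two one-sided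
difference quotients of the `e₂`-coordinate gives `S ε / ε → -(1 + ĵ) / (1 - ĵ)`. Both quotients
of the theorem are thereby expressed through `ε⁻¹ • (r ε - r 0)` and `ε⁻¹ • (r (S ε) - r 0)`,
which tend to `r'₊(0)` and `-(1 + ĵ) / (1 - ĵ) • r'₋(0)`.
-/

open Function MeasureTheory

namespace ConvexOn

variable {S : Set ℝ} {f : ℝ → ℝ} {x : ℝ}

theorem tendsto_rightDeriv_nhdsGT (hf : ConvexOn ℝ S f) (hx : x ∈ interior S) :
    Tendsto (fun y ↦ derivWithin f (Ioi y) y) (𝓝[>] x) (𝓝 (derivWithin f (Ioi x) x)) := by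
  have hint : ∀ᶠ y in 𝓝[>] x, y ∈ interior S :=
    mem_nhdsWithin_of_mem_nhds (isOpen_interior.mem_nhds hx)
  refine tendsto_order.2 ⟨fun l hl ↦ ?_, fun u hu ↦ ?_⟩
  · filter_upwards [hint, self_mem_nhdsWithin] with y hy hxy
    exact hl.trans_le (hf.monotoneOn_rightDeriv hx hy (le_of_lt hxy))
  · have hslope := (hasDerivWithinAt_iff_tendsto_slope' self_notMem_Ioi).1
      (hf.hasDerivWithinAt_rightDeriv_of_mem_interior hx)
    obtain ⟨y, hyu, hyS, hxy⟩ :=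
      ((hslope.eventually_lt_const hu).and (hint.and self_mem_nhdsWithin)).exists
    have hcont : Tendsto (fun m ↦ slope f m y) (𝓝[>] x) (𝓝 (slope f x y)) := by
      simp only [slope_def_field]
      exact ((continuousAt_const.sub (hf.continuousOn_interior.continuousAt
        (isOpen_interior.mem_nhds hx))).div (continuousAt_const.sub continuousAt_id)
        (sub_ne_zero.2 (ne_of_gt hxy))).tendsto.mono_left nhdsWithin_le_nhds
    filter_upwards [hcont.eventually_lt_const hyu, hint, Ioo_mem_nhdsGT hxy] with m hm hmS hmy
    exact (hf.rightDeriv_le_slope_of_mem_interior hmS (interior_subset hyS) hmy.2).trans_lt hm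

theorem tendsto_rightDeriv_nhdsLT (hf : ConvexOn ℝ S f) (hx : x ∈ interior S) :
    Tendsto (fun y ↦ derivWithin f (Ioi y) y) (𝓝[<] x) (𝓝 (derivWithin f (Iio x) x)) := by
  have hint : ∀ᶠ y in 𝓝[<] x, y ∈ interior S :=
    mem_nhdsWithin_of_mem_nhds (isOpen_interior.mem_nhds hx)
  refine tendsto_order.2 ⟨fun l hl ↦ ?_, fun u hu ↦ ?_⟩
  · have hslope := (hasDerivWithinAt_iff_tendsto_slope' self_notMem_Iio).1
      (hf.hasDerivWithinAt_leftDeriv_of_mem_interior hx)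
    obtain ⟨w, hwl, hwS, hwx⟩ :=
      ((hslope.eventually_const_lt hl).and (hint.and self_mem_nhdsWithin)).exists
    have hcont : Tendsto (fun m ↦ slope f w m) (𝓝[<] x) (𝓝 (slope f w x)) := by
      simp only [slope_def_field]
      exact (((hf.continuousOn_interior.continuousAt (isOpen_interior.mem_nhds hx)).sub
        continuousAt_const).div (continuousAt_id.sub continuousAt_const)
        (sub_ne_zero.2 (ne_of_gt hwx))).tendsto.mono_left nhdsWithin_le_nhds
    rw [slope_comm] at hwl
    filter_upwards [hcont.eventually_const_lt hwl, hint, Ioo_mem_nhdsLT hwx] with m hm hmS hwm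
    exact hm.trans_le ((hf.slope_le_leftDeriv_of_mem_interior (interior_subset hwS) hmS
      hwm.1).trans (hf.leftDeriv_le_rightDeriv_of_mem_interior hmS))
  · filter_upwards [hint, self_mem_nhdsWithin] with m hm hmx
    exact ((hf.rightDeriv_le_slope_of_mem_interior hm (interior_subset hx) hmx).trans
      (hf.slope_le_leftDeriv_of_mem_interior (interior_subset hm) hx hmx)).trans_lt hu

end ConvexOn

theorem tendsto_nhds_of_tendsto_comp_of_forall_ne {α : Type*} {l : Filter α} {φ : ℝ → ℝ}
    {S : α → ℝ} {a b c : ℝ} (hφ : ContinuousOn φ (Ico a b)) (hne : ∀ s ∈ Ico a b, φ s ≠ c)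
    (hS : ∀ᶠ x in l, S x ∈ Ico a b) (hφS : Tendsto (φ ∘ S) l (𝓝 c)) : Tendsto S l (𝓝 b) := by
  refine tendsto_order.2 ⟨fun y hy ↦ ?_, fun y hy ↦ ?_⟩
  · -- `φ` stays away from `c` on the compact interval `[a, y]`
    have hK : IsCompact (φ '' Icc a y) :=
      isCompact_Icc.image_of_continuousOn (hφ.mono (Icc_subset_Ico_right hy))
    have hc : c ∉ φ '' Icc a y := by
      rintro ⟨s, hs, rfl⟩
      exact hne s (Icc_subset_Ico_right hy hs) rfl
    filter_upwards [hS, hφS (hK.isClosed.isOpen_compl.mem_nhds hc)] with x hx hxK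
    by_contra! hxy
    exact hxK ⟨S x, ⟨hx.1, hxy⟩, rfl⟩
  · filter_upwards [hS] with x hx using hx.2.trans hy

theorem exists_tendsto_nhdsLT_apply_eq_neg {φ : ℝ → ℝ} (hφ : Continuous φ) (hφ0 : φ 0 = 0)
    (hpos : ∀ᶠ s in 𝓝[>] 0, 0 < φ s) (hneg : ∀ᶠ s in 𝓝[<] 0, φ s < 0) :
    ∃ S : ℝ → ℝ, Tendsto S (𝓝[>] 0) (𝓝[<] 0) ∧ ∀ᶠ ε in 𝓝[>] 0, φ (S ε) = -φ ε := by
  obtain ⟨a, ha, hneg⟩ := mem_nhdsLT_iff_exists_Ico_subset.1 hneg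
  have hφa : φ a < 0 := hneg ⟨le_rfl, ha⟩
  have hsol : ∀ᶠ ε in 𝓝[>] 0, ∃ s ∈ Ico a 0, φ s = -φ ε := by
    have hsmall : ∀ᶠ ε in 𝓝[>] (0 : ℝ), φ ε < -φ a :=
      ((hφ.tendsto 0).mono_left nhdsWithin_le_nhds).eventually_lt_const (by linarith)
    filter_upwards [hpos, hsmall] with ε hε hεa
    obtain ⟨s, hs, hφs⟩ := intermediate_value_Icc ha.le hφ.continuousOn
      (show -φ ε ∈ Icc (φ a) (φ 0) from ⟨by linarith, by linarith⟩)
    refine ⟨s, ⟨hs.1, lt_of_le_of_ne hs.2 ?_⟩, hφs⟩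
    rintro rfl
    linarith
  choose! S hS using fun ε (h : ∃ s ∈ Ico a 0, φ s = -φ ε) ↦ h
  have hSε := hsol.mono fun ε ↦ hS ε
  refine ⟨S, tendsto_nhdsWithin_iff.2 ⟨?_, hSε.mono fun ε h ↦ h.1.2⟩, hSε.mono fun ε h ↦ h.2⟩
  refine tendsto_nhds_of_tendsto_comp_of_forall_ne hφ.continuousOn
    (fun s hs ↦ (hneg hs).ne) (hSε.mono fun ε h ↦ h.1) ?_
  have : Tendsto (fun ε ↦ -φ ε) (𝓝[>] 0) (𝓝 0) := by
    simpa [hφ0] using ((hφ.tendsto 0).neg).mono_left nhdsWithin_le_nhds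
  exact this.congr' (hSε.mono fun ε h ↦ h.2.symm)

theorem tendsto_div_of_apply_eq_neg {φ S : ℝ → ℝ} {a b : ℝ} (hφ0 : φ 0 = 0)
    (ha : Tendsto (slope φ 0) (𝓝[>] 0) (𝓝 a)) (hb : Tendsto (slope φ 0) (𝓝[<] 0) (𝓝 b))
    (hb0 : b ≠ 0) (hS : Tendsto S (𝓝[>] 0) (𝓝[<] 0))
    (hφS : ∀ᶠ ε in 𝓝[>] 0, φ (S ε) = -φ ε) :
    Tendsto (fun ε ↦ S ε / ε) (𝓝[>] 0) (𝓝 (-(a / b))) := by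
  have hbS := hb.comp hS
  rw [← neg_div]
  refine (ha.neg.div hbS hb0).congr' ?_
  filter_upwards [hφS, hbS.eventually_ne hb0, self_mem_nhdsWithin,
    hS.eventually self_mem_nhdsWithin] with ε hε hne (hε0 : 0 < ε) (hSε : S ε < 0)
  simp only [Pi.div_apply, Function.comp_apply, slope_def_field, hφ0, sub_zero, hε] at hne ⊢
  have : φ ε ≠ 0 := by rintro h; simp [h] at hne
  field_simp

theorem exists_apply_eq_neg_of_tendsto_slope {φ : ℝ → ℝ} {a b : ℝ} (hφ : Continuous φ)
    (hφ0 : φ 0 = 0)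
    (ha : Tendsto (slope φ 0) (𝓝[>] 0) (𝓝 a)) (hb : Tendsto (slope φ 0) (𝓝[<] 0) (𝓝 b))
    (ha0 : 0 < a) (hb0 : 0 < b) :
    ∃ S : ℝ → ℝ, Tendsto S (𝓝[>] 0) (𝓝[<] 0) ∧ (∀ᶠ ε in 𝓝[>] 0, φ (S ε) = -φ ε) ∧
      Tendsto (fun ε ↦ S ε / ε) (𝓝[>] 0) (𝓝 (-(a / b))) := by
  have hpos : ∀ᶠ s in 𝓝[>] 0, 0 < φ s := by
    filter_upwards [ha.eventually_const_lt ha0, self_mem_nhdsWithin] with s hs (hs0 : 0 < s)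
    rw [slope_def_field, hφ0, sub_zero, sub_zero] at hs
    simpa [div_mul_cancel₀ _ hs0.ne'] using mul_pos hs hs0
  have hneg : ∀ᶠ s in 𝓝[<] 0, φ s < 0 := by
    filter_upwards [hb.eventually_const_lt hb0, self_mem_nhdsWithin] with s hs (hs0 : s < 0)
    rw [slope_def_field, hφ0, sub_zero, sub_zero] at hs
    simpa [div_mul_cancel₀ _ hs0.ne] using mul_neg_of_pos_of_neg hs hs0
  obtain ⟨S, hS, hφS⟩ := exists_tendsto_nhdsLT_apply_eq_neg hφ hφ0 hpos hneg
  exact ⟨S, hS, hφS, tendsto_div_of_apply_eq_neg hφ0 ha hb hb0.ne' hS hφS⟩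

theorem tendsto_inv_smul_sub_comp {E : Type*} [NormedAddCommGroup E] [NormedSpace ℝ E]
    {r : ℝ → E} {d : E} {S : ℝ → ℝ} {κ : ℝ} (hd : HasDerivWithinAt r d (Iic 0) 0)
    (hS : Tendsto S (𝓝[>] 0) (𝓝[<] 0)) (hκ : Tendsto (fun ε ↦ S ε / ε) (𝓝[>] 0) (𝓝 κ)) :
    Tendsto (fun ε ↦ ε⁻¹ • (r (S ε) - r 0)) (𝓝[>] 0) (𝓝 (κ • d)) := by
  have hslope := ((hasDerivWithinAt_iff_tendsto_slope' self_notMem_Iio).1 hd.Iio_of_Iic).comp hS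
  refine (hκ.smul hslope).congr' ?_
  filter_upwards [hS.eventually self_mem_nhdsWithin] with ε (hε : S ε < 0)
  rw [Function.comp_apply, slope_def_module, sub_zero, smul_smul]
  have := hε.ne
  congr 1
  field_simp

theorem HasDerivWithinAt.of_leftInverse {σ τ : ℝ → ℝ} {c a : ℝ} {s t : Set ℝ}
    (hσ : HasDerivWithinAt σ c t (τ a)) (hc : c ≠ 0) (hστ : LeftInverse σ τ)
    (hτ : Tendsto τ (𝓝[s \ {a}] a) (𝓝[t \ {τ a}] (τ a))) : HasDerivWithinAt τ c⁻¹ s a := by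
  rw [hasDerivWithinAt_iff_tendsto_slope] at hσ ⊢
  refine ((hσ.comp hτ).inv₀ hc).congr fun x ↦ ?_
  simp only [Function.comp_apply, slope_def_field, hστ x, hστ a, inv_div]

theorem mapsTo_Ioi_of_leftInverse {σ τ : ℝ → ℝ} (hστ : LeftInverse σ τ)
    (hσ : ∀ t ≤ 0, σ t ≤ 0) : MapsTo τ (Ioi 0) (Ioi 0) := fun x hx ↦
  lt_of_not_ge fun h ↦ (hστ x ▸ hσ (τ x) h).not_gt hx

theorem mapsTo_Iio_of_leftInverse {σ τ : ℝ → ℝ} (hστ : LeftInverse σ τ)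
    (hσ : ∀ t, 0 ≤ t → 0 ≤ σ t) : MapsTo τ (Iio 0) (Iio 0) := fun x hx ↦
  lt_of_not_ge fun h ↦ (hστ x ▸ hσ (τ x) h).not_gt hx

theorem eq_zero_of_leftInverse {σ τ : ℝ → ℝ} (hστ : LeftInverse σ τ) (hτ : ContinuousAt τ 0)
    (hnonneg : ∀ t, 0 ≤ t → 0 ≤ σ t) (hnonpos : ∀ t ≤ 0, σ t ≤ 0) : τ 0 = 0 :=
  le_antisymm
    (le_of_tendsto (hτ.tendsto.mono_left nhdsWithin_le_nhds : Tendsto τ (𝓝[<] 0) _)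
      (eventually_nhdsWithin_of_forall fun _ hx ↦ (mapsTo_Iio_of_leftInverse hστ hnonneg hx).le))
    (ge_of_tendsto (hτ.tendsto.mono_left nhdsWithin_le_nhds : Tendsto τ (𝓝[>] 0) _)
      (eventually_nhdsWithin_of_forall fun _ hx ↦ (mapsTo_Ioi_of_leftInverse hστ hnonpos hx).le))

theorem arclength_nonneg {G σ : ℝ → ℝ} (hσ : ∀ t, σ t = ∫ u in (0 : ℝ)..t, G u)
    (hG : ∀ u, 0 ≤ G u) (t : ℝ) (ht : 0 ≤ t) : 0 ≤ σ t :=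
  hσ t ▸ intervalIntegral.integral_nonneg ht fun u _ ↦ hG u

theorem arclength_nonpos {G σ : ℝ → ℝ} (hσ : ∀ t, σ t = ∫ u in (0 : ℝ)..t, G u)
    (hG : ∀ u, 0 ≤ G u) (t : ℝ) (ht : t ≤ 0) : σ t ≤ 0 := by
  rw [hσ, intervalIntegral.integral_symm, neg_nonpos]
  exact intervalIntegral.integral_nonneg ht fun u _ ↦ hG u

section ArcLength

variable {E : Type*} [NormedAddCommGroup E] [NormedSpace ℝ E] [CompleteSpace E]

theorem hasDerivWithinAt_integral_Ici_of_tendsto {F : ℝ → E} {a : ℝ} {c : E}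
    (hF : StronglyMeasurable F) (hlim : Tendsto F (𝓝[>] a) (𝓝 c)) :
    HasDerivWithinAt (fun t ↦ ∫ u in a..t, F u) c (Ici a) a :=
  intervalIntegral.integral_hasDerivWithinAt_of_tendsto_ae_right .refl
    hF.stronglyMeasurableAtFilter (hlim.mono_left inf_le_left)

theorem hasDerivWithinAt_integral_Iic_of_tendsto {F : ℝ → E} {a : ℝ} {c : E}
    (hF : StronglyMeasurable F) (hlim : Tendsto F (𝓝[<] a) (𝓝 c)) :
    HasDerivWithinAt (fun t ↦ ∫ u in a..t, F u) c (Iic a) a := by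
  -- the value `F a` is invisible to the integral since `{a}` is a null set
  have hae : 𝓝[≤] a ⊓ ae volume ≤ 𝓝[<] a :=
    le_inf (inf_le_left.trans nhdsWithin_le_nhds) (le_principal_iff.2 (mem_inf_of_inter
      self_mem_nhdsWithin (compl_mem_ae_iff.2 (measure_singleton a))
      fun x hx ↦ lt_of_le_of_ne hx.1 hx.2))
  exact intervalIntegral.integral_hasDerivWithinAt_of_tendsto_ae_right .refl
    hF.stronglyMeasurableAtFilter (hlim.mono_left hae)

variable {p : ℝ → E} {P : E} {σ τ : ℝ → ℝ}

theorem hasDerivWithinAt_comp_arclength_inverse_Ici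
    (hp : HasDerivWithinAt p P (Ici 0) 0) (hP : P ≠ 0)
    (hlim : Tendsto (fun u ↦ ‖derivWithin p (Ici u) u‖) (𝓝[>] 0) (𝓝 ‖P‖))
    (hσ : ∀ t, σ t = ∫ u in (0 : ℝ)..t, ‖derivWithin p (Ici u) u‖) (hτ : Continuous τ)
    (hστ : LeftInverse σ τ) : HasDerivWithinAt (p ∘ τ) (‖P‖⁻¹ • P) (Ici 0) 0 := by
  have hσ₀ := arclength_nonneg hσ fun _ ↦ norm_nonneg _
  have hσ₁ := arclength_nonpos hσ fun _ ↦ norm_nonneg _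
  have hτ0 : τ 0 = 0 := eq_zero_of_leftInverse hστ hτ.continuousAt hσ₀ hσ₁
  have hpos := mapsTo_Ioi_of_leftInverse hστ hσ₁
  have hσ' : HasDerivWithinAt σ ‖P‖ (Ici 0) (τ 0) := by
    rw [hτ0, funext hσ]
    exact hasDerivWithinAt_integral_Ici_of_tendsto
      (stronglyMeasurable_derivWithin_Ici p).norm hlim
  have hτ' : HasDerivWithinAt τ ‖P‖⁻¹ (Ici 0) 0 := by
    refine hσ'.of_leftInverse (norm_ne_zero_iff.2 hP) hστ ?_
    have := (hτ.continuousWithinAt (s := Ioi 0) (x := 0)).tendsto_nhdsWithin hpos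
    simpa only [hτ0, Ici_sdiff_left] using this
  have hp' : HasDerivWithinAt p P (Ici 0) (τ 0) := by rwa [hτ0]
  refine hp'.scomp 0 hτ' fun x hx ↦ ?_
  rcases (mem_Ici.1 hx).eq_or_lt with rfl | h
  · exact hτ0.ge
  · exact (mem_Ioi.1 (hpos h)).le

theorem hasDerivWithinAt_comp_arclength_inverse_Iic
    (hp : HasDerivWithinAt p P (Iic 0) 0) (hP : P ≠ 0)
    (hlim : Tendsto (fun u ↦ ‖derivWithin p (Ici u) u‖) (𝓝[<] 0) (𝓝 ‖P‖))
    (hσ : ∀ t, σ t = ∫ u in (0 : ℝ)..t, ‖derivWithin p (Ici u) u‖) (hτ : Continuous τ)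
    (hστ : LeftInverse σ τ) : HasDerivWithinAt (p ∘ τ) (‖P‖⁻¹ • P) (Iic 0) 0 := by
  have hσ₀ := arclength_nonneg hσ fun _ ↦ norm_nonneg _
  have hσ₁ := arclength_nonpos hσ fun _ ↦ norm_nonneg _
  have hτ0 : τ 0 = 0 := eq_zero_of_leftInverse hστ hτ.continuousAt hσ₀ hσ₁
  have hneg := mapsTo_Iio_of_leftInverse hστ hσ₀
  have hσ' : HasDerivWithinAt σ ‖P‖ (Iic 0) (τ 0) := by
    rw [hτ0, funext hσ]
    exact hasDerivWithinAt_integral_Iic_of_tendsto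
      (stronglyMeasurable_derivWithin_Ici p).norm hlim
  have hτ' : HasDerivWithinAt τ ‖P‖⁻¹ (Iic 0) 0 := by
    refine hσ'.of_leftInverse (norm_ne_zero_iff.2 hP) hστ ?_
    have := (hτ.continuousWithinAt (s := Iio 0) (x := 0)).tendsto_nhdsWithin hneg
    simpa only [hτ0, Iic_sdiff_right] using this
  have hp' : HasDerivWithinAt p P (Iic 0) (τ 0) := by rwa [hτ0]
  refine hp'.scomp 0 hτ' fun x hx ↦ ?_
  rcases (mem_Iic.1 hx).eq_or_lt with rfl | h
  · exact hτ0.le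
  · exact (mem_Iio.1 (hneg h)).le

end ArcLength

open Real

theorem tendsto_tan_nhdsGT_zero : Tendsto tan (𝓝[>] 0) (𝓝[>] 0) := by
  refine tendsto_nhdsWithin_iff.2 ⟨?_, ?_⟩
  · simpa using (continuousAt_tan (x := 0)).2 (by simp) |>.tendsto.mono_left nhdsWithin_le_nhds
  · filter_upwards [Ioo_mem_nhdsGT (by positivity : (0 : ℝ) < π / 2)] with t ht
    exact tan_pos_of_pos_of_lt_pi_div_two ht.1 ht.2

theorem tendsto_tan_nhdsLT_zero : Tendsto tan (𝓝[<] 0) (𝓝[<] 0) := by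
  refine tendsto_nhdsWithin_iff.2 ⟨?_, ?_⟩
  · simpa using (continuousAt_tan (x := 0)).2 (by simp) |>.tendsto.mono_left nhdsWithin_le_nhds
  · filter_upwards [Ioo_mem_nhdsLT (by linarith [pi_pos] : -(π / 2) < 0)] with t ht
    exact tan_neg_of_neg_of_pi_div_two_lt ht.2 ht.1

section PolarParam

variable {X : Type*} [NormedAddCommGroup X] [NormedSpace ℝ X] {e₁ e₂ : X}

noncomputable def polarParam (e₁ e₂ : X) (t : ℝ) : X :=
  ‖cos t • e₁ + sin t • e₂‖⁻¹ • (cos t • e₁ + sin t • e₂)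

/-- `polarParam e₁ e₂` in the chart `m = tan t`, in which the convexity of `m ↦ ‖e₁ + m • e₂‖`
provides one-sided derivatives. -/
noncomputable def lineParam (e₁ e₂ : X) (m : ℝ) : X := ‖e₁ + m • e₂‖⁻¹ • (e₁ + m • e₂)

/-- `d` stands for a one-sided derivative of `m ↦ ‖e₁ + m • e₂‖` at `m`. -/
noncomputable def lineParamDeriv (e₁ e₂ : X) (m d : ℝ) : X :=
  ‖e₁ + m • e₂‖⁻¹ • e₂ - (d / ‖e₁ + m • e₂‖ ^ 2) • (e₁ + m • e₂)

theorem add_smul_ne_zero (hInd : LinearIndependent ℝ ![e₁, e₂]) (m : ℝ) : e₁ + m • e₂ ≠ 0 := by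
  intro h
  simpa using (LinearIndependent.pair_iff.1 hInd 1 m (by simpa using h)).1

theorem cos_smul_add_sin_smul_ne_zero (hInd : LinearIndependent ℝ ![e₁, e₂]) (t : ℝ) :
    cos t • e₁ + sin t • e₂ ≠ 0 := by
  intro h
  obtain ⟨hc, hs⟩ := LinearIndependent.pair_iff.1 hInd _ _ h
  simpa [hc, hs] using sin_sq_add_cos_sq t

theorem convexOn_norm_add_smul (e₁ e₂ : X) : ConvexOn ℝ univ fun m : ℝ ↦ ‖e₁ + m • e₂‖ :=
  (convexOn_norm convex_univ).comp_affineMap (AffineMap.lineMap e₁ (e₁ + e₂)) |>.congr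
    fun m _ ↦ by simp [AffineMap.lineMap_apply, add_comm]

theorem continuous_polarParam (hInd : LinearIndependent ℝ ![e₁, e₂]) :
    Continuous (polarParam e₁ e₂) := by
  have hc : Continuous fun t ↦ cos t • e₁ + sin t • e₂ := by fun_prop
  exact (hc.norm.inv₀ fun t ↦ norm_ne_zero_iff.2 (cos_smul_add_sin_smul_ne_zero hInd t)).smul hc

theorem norm_polarParam (hInd : LinearIndependent ℝ ![e₁, e₂]) (t : ℝ) :
    ‖polarParam e₁ e₂ t‖ = 1 :=
  norm_smul_inv_norm (cos_smul_add_sin_smul_ne_zero hInd t)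

theorem polarParam_zero (he₁ : ‖e₁‖ = 1) : polarParam e₁ e₂ 0 = e₁ := by
  simp [polarParam, he₁]

theorem polarParam_eq_lineParam_tan {t : ℝ} (ht : t ∈ Ioo (-(π / 2)) (π / 2)) :
    polarParam e₁ e₂ t = lineParam e₁ e₂ (tan t) := by
  have hc : 0 < cos t := cos_pos_of_mem_Ioo ht
  have hv : cos t • e₁ + sin t • e₂ = cos t • (e₁ + tan t • e₂) := by
    rw [smul_add, smul_smul, tan_eq_sin_div_cos, mul_div_cancel₀ _ hc.ne']
  rw [polarParam, lineParam, hv, norm_smul, norm_of_nonneg hc.le, smul_smul, mul_inv_rev,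
    inv_mul_cancel_right₀ hc.ne']

theorem continuous_lineParamDeriv (hInd : LinearIndependent ℝ ![e₁, e₂]) :
    Continuous fun z : ℝ × ℝ ↦ lineParamDeriv e₁ e₂ z.1 z.2 := by
  have hg : Continuous fun z : ℝ × ℝ ↦ ‖e₁ + z.1 • e₂‖ := by fun_prop
  have hg0 (z : ℝ × ℝ) : ‖e₁ + z.1 • e₂‖ ≠ 0 := norm_ne_zero_iff.2 (add_smul_ne_zero hInd _)
  exact ((hg.inv₀ hg0).smul continuous_const).sub
    ((continuous_snd.div (hg.pow 2) fun z ↦ pow_ne_zero 2 (hg0 z)).smul (by fun_prop))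

theorem hasDerivWithinAt_lineParam {s : Set ℝ} {m d : ℝ} (hm : e₁ + m • e₂ ≠ 0)
    (hd : HasDerivWithinAt (fun m : ℝ ↦ ‖e₁ + m • e₂‖) d s m) :
    HasDerivWithinAt (lineParam e₁ e₂) (lineParamDeriv e₁ e₂ m d) s m := by
  have hline : HasDerivWithinAt (fun m : ℝ ↦ e₁ + m • e₂) e₂ s m := by
    simpa using (((hasDerivAt_id m).smul_const e₂).const_add e₁).hasDerivWithinAt
  convert (hd.inv (norm_ne_zero_iff.2 hm)).smul hline using 1
  · rfl
  simp only [lineParamDeriv, Pi.inv_apply, neg_div, neg_smul]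
  abel

theorem hasDerivWithinAt_polarParam (hInd : LinearIndependent ℝ ![e₁, e₂]) {s s' : Set ℝ}
    {t d : ℝ} (ht : t ∈ Ioo (-(π / 2)) (π / 2))
    (hd : HasDerivWithinAt (fun m : ℝ ↦ ‖e₁ + m • e₂‖) d s' (tan t))
    (hs : MapsTo tan (s ∩ Ioo (-(π / 2)) (π / 2)) s') :
    HasDerivWithinAt (polarParam e₁ e₂)
      ((1 / cos t ^ 2) • lineParamDeriv e₁ e₂ (tan t) d) s t := by
  have htan := (hasDerivAt_tan (cos_pos_of_mem_Ioo ht).ne').hasDerivWithinAt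
    (s := s ∩ Ioo (-(π / 2)) (π / 2))
  have h := (hasDerivWithinAt_lineParam (add_smul_ne_zero hInd _) hd).scomp t htan hs
  refine (hasDerivWithinAt_inter (Ioo_mem_nhds ht.1 ht.2)).1 (h.congr (fun u hu ↦ ?_) ?_)
  · exact polarParam_eq_lineParam_tan hu.2
  · exact polarParam_eq_lineParam_tan ht

theorem hasDerivWithinAt_polarParam_Ici (hInd : LinearIndependent ℝ ![e₁, e₂]) {t : ℝ}
    (ht : t ∈ Ioo (-(π / 2)) (π / 2)) :
    HasDerivWithinAt (polarParam e₁ e₂) ((1 / cos t ^ 2) • lineParamDeriv e₁ e₂ (tan t)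
      (derivWithin (fun m : ℝ ↦ ‖e₁ + m • e₂‖) (Ioi (tan t)) (tan t))) (Ici t) t :=
  hasDerivWithinAt_polarParam hInd ht
    ((convexOn_norm_add_smul e₁ e₂).hasDerivWithinAt_rightDeriv_of_mem_interior
      (by simp)).Ici_of_Ioi
    fun _ hu ↦ strictMonoOn_tan.monotoneOn ht hu.2 hu.1

theorem hasDerivWithinAt_polarParam_Iic (hInd : LinearIndependent ℝ ![e₁, e₂]) {t : ℝ}
    (ht : t ∈ Ioo (-(π / 2)) (π / 2)) :
    HasDerivWithinAt (polarParam e₁ e₂) ((1 / cos t ^ 2) • lineParamDeriv e₁ e₂ (tan t)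
      (derivWithin (fun m : ℝ ↦ ‖e₁ + m • e₂‖) (Iio (tan t)) (tan t))) (Iic t) t :=
  hasDerivWithinAt_polarParam hInd ht
    ((convexOn_norm_add_smul e₁ e₂).hasDerivWithinAt_leftDeriv_of_mem_interior
      (by simp)).Iic_of_Iio
    fun _ hu ↦ strictMonoOn_tan.monotoneOn hu.2 ht hu.1

theorem tendsto_smul_lineParamDeriv (hInd : LinearIndependent ℝ ![e₁, e₂]) {l : Filter ℝ}
    {D : ℝ → ℝ} {d : ℝ} (hl : l ≤ 𝓝 0) (hD : Tendsto D l (𝓝 d)) :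
    Tendsto (fun u ↦ (1 / cos u ^ 2) • lineParamDeriv e₁ e₂ (tan u) (D u)) l
      (𝓝 (lineParamDeriv e₁ e₂ 0 d)) := by
  have hcos : Tendsto (fun u ↦ 1 / cos u ^ 2) l (𝓝 1) := by
    simpa using ((continuous_cos.tendsto 0).pow 2).inv₀ (by simp) |>.mono_left hl
  have htan : Tendsto tan l (𝓝 0) := by
    simpa using ((continuousAt_tan (x := 0)).2 (by simp)).tendsto.mono_left hl
  simpa using hcos.smul ((continuous_lineParamDeriv hInd).tendsto (0, d) |>.comp
    (htan.prodMk_nhds hD))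

theorem eventually_derivWithin_polarParam (hInd : LinearIndependent ℝ ![e₁, e₂]) :
    ∀ᶠ u in 𝓝 0, derivWithin (polarParam e₁ e₂) (Ici u) u = (1 / cos u ^ 2) • lineParamDeriv e₁ e₂
      (tan u) (derivWithin (fun m : ℝ ↦ ‖e₁ + m • e₂‖) (Ioi (tan u)) (tan u)) := by
  filter_upwards [Ioo_mem_nhds (by linarith [pi_pos] : -(π / 2) < 0)
    (by linarith [pi_pos] : 0 < π / 2)] with u hu
  exact (hasDerivWithinAt_polarParam_Ici hInd hu).derivWithin (uniqueDiffWithinAt_Ici u)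

theorem tendsto_derivWithin_polarParam_nhdsGT (hInd : LinearIndependent ℝ ![e₁, e₂]) :
    Tendsto (fun u ↦ derivWithin (polarParam e₁ e₂) (Ici u) u) (𝓝[>] 0)
      (𝓝 (lineParamDeriv e₁ e₂ 0 (derivWithin (fun m : ℝ ↦ ‖e₁ + m • e₂‖) (Ioi 0) 0))) :=
  (tendsto_smul_lineParamDeriv hInd nhdsWithin_le_nhds
    (((convexOn_norm_add_smul e₁ e₂).tendsto_rightDeriv_nhdsGT (by simp)).comp
      tendsto_tan_nhdsGT_zero)).congr'
    ((eventually_derivWithin_polarParam hInd).filter_mono nhdsWithin_le_nhds |>.mono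
      fun _ h ↦ h.symm)

theorem tendsto_derivWithin_polarParam_nhdsLT (hInd : LinearIndependent ℝ ![e₁, e₂]) :
    Tendsto (fun u ↦ derivWithin (polarParam e₁ e₂) (Ici u) u) (𝓝[<] 0)
      (𝓝 (lineParamDeriv e₁ e₂ 0 (derivWithin (fun m : ℝ ↦ ‖e₁ + m • e₂‖) (Iio 0) 0))) :=
  (tendsto_smul_lineParamDeriv hInd nhdsWithin_le_nhds
    (((convexOn_norm_add_smul e₁ e₂).tendsto_rightDeriv_nhdsLT (by simp)).comp
      tendsto_tan_nhdsLT_zero)).congr'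
    ((eventually_derivWithin_polarParam hInd).filter_mono nhdsWithin_le_nhds |>.mono
      fun _ h ↦ h.symm)

theorem apply_lineParamDeriv_zero {ℓ : X →L[ℝ] ℝ} (hℓ₁ : ℓ e₁ = 0) (hℓ₂ : ℓ e₂ = 1) (d : ℝ) :
    ℓ (lineParamDeriv e₁ e₂ 0 d) = ‖e₁‖⁻¹ := by
  simp [lineParamDeriv, hℓ₁, hℓ₂]

theorem exists_hasDerivWithinAt_polarParam_comp_Ici [CompleteSpace X]
    (hInd : LinearIndependent ℝ ![e₁, e₂]) {σ τ : ℝ → ℝ}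
    (hσ : ∀ t, σ t = ∫ u in (0 : ℝ)..t, ‖derivWithin (polarParam e₁ e₂) (Ici u) u‖)
    (hτ : Continuous τ) (hστ : LeftInverse σ τ) {ℓ : X →L[ℝ] ℝ} (hℓ₁ : ℓ e₁ = 0)
    (hℓ₂ : ℓ e₂ = 1) :
    ∃ d, HasDerivWithinAt (polarParam e₁ e₂ ∘ τ) d (Ici 0) 0 ∧ ‖d‖ = 1 ∧ 0 < ℓ d := by
  set P := lineParamDeriv e₁ e₂ 0 (derivWithin (fun m : ℝ ↦ ‖e₁ + m • e₂‖) (Ioi 0) 0)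
  have hℓP : 0 < ℓ P := by
    rw [apply_lineParamDeriv_zero hℓ₁ hℓ₂, inv_pos, norm_pos_iff]
    simpa using hInd.ne_zero 0
  have hP : P ≠ 0 := fun h ↦ by simp [h] at hℓP
  have hp : HasDerivWithinAt (polarParam e₁ e₂) P (Ici 0) 0 := by
    simpa using hasDerivWithinAt_polarParam_Ici hInd (t := 0)
      ⟨by linarith [pi_pos], by linarith [pi_pos]⟩
  refine ⟨‖P‖⁻¹ • P, hasDerivWithinAt_comp_arclength_inverse_Ici hp hP
    (tendsto_derivWithin_polarParam_nhdsGT hInd).norm hσ hτ hστ, norm_smul_inv_norm hP, ?_⟩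
  rw [map_smul, smul_eq_mul]
  exact mul_pos (inv_pos.2 (norm_pos_iff.2 hP)) hℓP

theorem exists_hasDerivWithinAt_polarParam_comp_Iic [CompleteSpace X]
    (hInd : LinearIndependent ℝ ![e₁, e₂]) {σ τ : ℝ → ℝ}
    (hσ : ∀ t, σ t = ∫ u in (0 : ℝ)..t, ‖derivWithin (polarParam e₁ e₂) (Ici u) u‖)
    (hτ : Continuous τ) (hστ : LeftInverse σ τ) {ℓ : X →L[ℝ] ℝ} (hℓ₁ : ℓ e₁ = 0)
    (hℓ₂ : ℓ e₂ = 1) :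
    ∃ d, HasDerivWithinAt (polarParam e₁ e₂ ∘ τ) d (Iic 0) 0 ∧ ‖d‖ = 1 ∧ 0 < ℓ d := by
  set P := lineParamDeriv e₁ e₂ 0 (derivWithin (fun m : ℝ ↦ ‖e₁ + m • e₂‖) (Iio 0) 0)
  have hℓP : 0 < ℓ P := by
    rw [apply_lineParamDeriv_zero hℓ₁ hℓ₂, inv_pos, norm_pos_iff]
    simpa using hInd.ne_zero 0
  have hP : P ≠ 0 := fun h ↦ by simp [h] at hℓP
  have hp : HasDerivWithinAt (polarParam e₁ e₂) P (Iic 0) 0 := by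
    simpa using hasDerivWithinAt_polarParam_Iic hInd (t := 0)
      ⟨by linarith [pi_pos], by linarith [pi_pos]⟩
  refine ⟨‖P‖⁻¹ • P, hasDerivWithinAt_comp_arclength_inverse_Iic hp hP
    (tendsto_derivWithin_polarParam_nhdsLT hInd).norm hσ hτ hστ, norm_smul_inv_norm hP, ?_⟩
  rw [map_smul, smul_eq_mul]
  exact mul_pos (inv_pos.2 (norm_pos_iff.2 hP)) hℓP

end PolarParam

theorem exists_coord_of_finrank_eq_two {X : Type*} [NormedAddCommGroup X] [NormedSpace ℝ X]
    (hdim : Module.finrank ℝ X = 2) {e₁ e₂ : X} (hInd : LinearIndependent ℝ ![e₁, e₂]) :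
    ∃ A ℓ : X →L[ℝ] ℝ, A e₁ = 1 ∧ A e₂ = 0 ∧ ℓ e₁ = 0 ∧ ℓ e₂ = 1 ∧
      ∀ x, x = A x • e₁ + ℓ x • e₂ := by
  have : FiniteDimensional ℝ X := .of_finrank_eq_succ hdim
  let B := basisOfLinearIndependentOfCardEqFinrank hInd (by simp [hdim])
  have hB : ⇑B = ![e₁, e₂] := coe_basisOfLinearIndependentOfCardEqFinrank hInd _
  have hB₀ : B 0 = e₁ := by simp [hB]
  have hB₁ : B 1 = e₂ := by simp [hB]
  refine ⟨LinearMap.toContinuousLinearMap (B.coord 0), LinearMap.toContinuousLinearMap (B.coord 1),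
    ?_, ?_, ?_, ?_, fun x ↦ ?_⟩
  all_goals simp only [LinearMap.coe_toContinuousLinearMap', ← hB₀, ← hB₁, Module.Basis.coord_apply]
  · simp
  · simp
  · simp
  · simp
  · have h := B.sum_repr x
    rw [Fin.sum_univ_two] at h
    exact h.symm

section Sphere

variable {X : Type*} [NormedAddCommGroup X] [NormedSpace ℝ X] {e₁ : X} {A ℓ : X →L[ℝ] ℝ}

theorem bar_eq_neg_of_apply_add_eq_zero {bar : X → X}
    (hbar : ∀ x ∈ sphere (0 : X) 1,
      ({x, bar x} : Set X) = sphere (0 : X) 1 ∩ {w : X | ∃ t : ℝ, w = x + t • e₁})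
    (hker : ∀ z, ℓ z = 0 → z = A z • e₁) {x y : X} (hx : ‖x‖ = 1) (hy : ‖y‖ = 1)
    (hxy : ℓ (x + y) = 0) (hAx : 0 < A x) (hAy : 0 < A y) : bar x = -y := by
  have hline : -y = x + (-A (x + y)) • e₁ := by
    rw [neg_smul, ← hker _ hxy]
    abel
  have hmem : -y ∈ ({x, bar x} : Set X) := by
    rw [hbar x (mem_sphere_zero_iff_norm.2 hx)]
    exact ⟨by simpa using hy, _, hline⟩
  rcases hmem with h | h
  · have := congrArg A h
    simp only [map_neg] at this
    linarith
  · exact h.symm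

theorem norm_eq_apply_of_apply_eq_zero (he₁ : ‖e₁‖ = 1) (hker : ∀ z, ℓ z = 0 → z = A z • e₁)
    {z : X} (hz : ℓ z = 0) (hAz : 0 ≤ A z) : ‖z‖ = A z := by
  have h := congrArg norm (hker z hz)
  rwa [norm_smul, he₁, mul_one, Real.norm_of_nonneg hAz] at h

theorem tendsto_jump_quotients {r : ℝ → X} {dp dm : X} {bar : X → X}
    (hbar : ∀ x ∈ sphere (0 : X) 1,
      ({x, bar x} : Set X) = sphere (0 : X) 1 ∩ {w : X | ∃ t : ℝ, w = x + t • e₁})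
    (hker : ∀ z, ℓ z = 0 → z = A z • e₁) (hA₁ : A e₁ = 1) (hℓ₁ : ℓ e₁ = 0)
    (hr : Continuous r) (hr1 : ∀ s, ‖r s‖ = 1) (hr0 : r 0 = e₁)
    (hdp : HasDerivWithinAt r dp (Ici 0) 0) (hdm : HasDerivWithinAt r dm (Iic 0) 0)
    (hdpn : ‖dp‖ = 1) (hdmn : ‖dm‖ = 1) (hℓdp : 0 < ℓ dp) (hℓdm : 0 < ℓ dm) :
    Tendsto (fun ε ↦ ‖r ε - r 0‖ / ‖bar (r ε) + r 0‖) (𝓝[>] 0) (𝓝 (ℓ dm / ℓ dp)) ∧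
    Tendsto (fun ε ↦ (‖r ε - bar (r ε)‖ - 2) / (2 * ε)) (𝓝[>] 0)
      (𝓝 ((A dp - ℓ dp / ℓ dm * A dm) / 2)) := by
  have hu := (hasDerivWithinAt_iff_tendsto_slope' self_notMem_Ioi).1 hdp.Ioi_of_Ici
  have hφr := (hasDerivWithinAt_iff_tendsto_slope' self_notMem_Ioi).1
    (ℓ.hasFDerivAt.comp_hasDerivWithinAt 0 hdp).Ioi_of_Ici
  have hφl := (hasDerivWithinAt_iff_tendsto_slope' self_notMem_Iio).1
    (ℓ.hasFDerivAt.comp_hasDerivWithinAt 0 hdm).Iio_of_Iic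
  obtain ⟨S, hS, hφS, hK⟩ :=
    exists_apply_eq_neg_of_tendsto_slope (ℓ.continuous.comp hr) (by simp [hr0, hℓ₁]) hφr hφl
      hℓdp hℓdm
  have hv := tendsto_inv_smul_sub_comp hdm hS hK
  have hAr : ∀ᶠ s in 𝓝 0, 0 < A (r s) :=
    ((A.continuous.comp hr).tendsto 0).eventually_const_lt (by simp [hr0, hA₁])
  have hev : ∀ᶠ ε in 𝓝[>] 0, 0 < ε ∧ bar (r ε) = -r (S ε) ∧
      ‖r ε - bar (r ε)‖ = A (r ε) + A (r (S ε)) := by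
    filter_upwards [self_mem_nhdsWithin, hφS, hAr.filter_mono nhdsWithin_le_nhds,
      (hS.mono_right nhdsWithin_le_nhds).eventually hAr] with ε hε hφε hAε hASε
    have hsum : ℓ (r ε + r (S ε)) = 0 := by
      simp only [Function.comp_apply] at hφε
      rw [map_add, hφε, add_neg_cancel]
    have hbarε := bar_eq_neg_of_apply_add_eq_zero hbar hker (hr1 ε) (hr1 (S ε)) hsum hAε hASε
    refine ⟨hε, hbarε, ?_⟩
    rw [hbarε, sub_neg_eq_add, norm_eq_apply_of_apply_eq_zero (hr0 ▸ hr1 0) hker hsum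
      (by rw [map_add]; positivity), map_add]
  constructor
  · have hlim := hu.norm.div hv.norm (by
      rw [norm_smul, hdmn, mul_one, norm_neg, Real.norm_eq_abs]
      positivity)
    have hval : ‖dp‖ / ‖(-(ℓ dp / ℓ dm)) • dm‖ = ℓ dm / ℓ dp := by
      rw [hdpn, norm_smul, hdmn, mul_one, norm_neg, Real.norm_of_nonneg (by positivity),
        one_div_div]
    rw [hval] at hlim
    refine hlim.congr' ?_
    filter_upwards [hev] with ε ⟨hε, hbarε, _⟩
    rw [hbarε, neg_add_eq_sub, norm_sub_rev (r 0), Pi.div_apply, slope_def_module, sub_zero,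
      norm_smul, norm_smul, mul_div_mul_left _ _ (norm_ne_zero_iff.2 (inv_ne_zero hε.ne'))]
  · have hlim := ((A.continuous.tendsto _).comp (hu.add hv)).div_const 2
    have hval : A (dp + (-(ℓ dp / ℓ dm)) • dm) / 2 = (A dp - ℓ dp / ℓ dm * A dm) / 2 := by
      simp only [map_add, map_smul, smul_eq_mul]
      ring
    rw [hval] at hlim
    refine hlim.congr' ?_
    filter_upwards [hev] with ε ⟨hε, _, hnorm⟩
    rw [hnorm, Function.comp_apply, slope_def_module, sub_zero, ← smul_add, map_smul, map_add,
      map_sub, map_sub, hr0, hA₁, smul_eq_mul]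
    field_simp
    ring

end Sphere

theorem jumps_determined_by_metric_general
    {X : Type*} [NormedAddCommGroup X] [NormedSpace ℝ X] [CompleteSpace X]
    (hdim : Module.finrank ℝ X = 2)
    (e₁ e₂ : X) (hInd : LinearIndependent ℝ ![e₁, e₂])
    (he₁ : e₁ ∈ sphere (0 : X) 1)
    (p : ℝ → X)
    (hp : ∀ t, p t = ‖Real.cos t • e₁ + Real.sin t • e₂‖⁻¹ •
      (Real.cos t • e₁ + Real.sin t • e₂))
    (σ : ℝ → ℝ) (hσ : ∀ t, σ t = ∫ u in (0:ℝ)..t, ‖derivWithin p (Ici u) u‖)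
    (τ : ℝ → ℝ) (hτ_cont : Continuous τ)
    (hστ : ∀ x, σ (τ x) = x)
    (r : ℝ → X) (hr : ∀ s, r s = p (τ s))
    -- the one-sided derivatives of `r` at `0`, with `e₂ = r'±(0)`
    (dm dp : X)
    (hdm : HasDerivWithinAt r dm (Iic (0:ℝ)) 0) (hdp : HasDerivWithinAt r dp (Ici (0:ℝ)) 0)
    (he₂ : e₂ = (1/2 : ℝ) • (dp + dm))
    -- the radial jump `j` and tangential jump `ĵ` at `0`
    (j jhat : ℝ)
    (hjj : (1/2 : ℝ) • (dp - dm) = j • r 0 + jhat • ((1/2 : ℝ) • (dp + dm)))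
    -- `bar x` is the unique point of the sphere with `{x, bar x} = S_X ∩ (x + ℝ·e₁)`
    (bar : X → X)
    (hbar : ∀ x ∈ sphere (0 : X) 1,
      ({x, bar x} : Set X) = sphere (0 : X) 1 ∩ {w : X | ∃ t : ℝ, w = x + t • e₁}) :
    Tendsto (fun ε : ℝ => ‖r ε - r 0‖ / ‖bar (r ε) + r 0‖) (𝓝[>] 0)
      (𝓝 ((1 - jhat) / (1 + jhat))) ∧
    Tendsto (fun ε : ℝ => (‖r ε - bar (r ε)‖ - 2) / (2 * ε)) (𝓝[>] 0)
      (𝓝 (j / (1 - jhat))) := by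
  obtain ⟨A, ℓ, hA₁, hA₂, hℓ₁, hℓ₂, hdecomp⟩ := exists_coord_of_finrank_eq_two hdim hInd
  obtain rfl : p = polarParam e₁ e₂ := funext hp
  obtain rfl : r = polarParam e₁ e₂ ∘ τ := funext hr
  obtain ⟨dp', hdp', hdpn, hℓdp⟩ :=
    exists_hasDerivWithinAt_polarParam_comp_Ici hInd hσ hτ_cont hστ hℓ₁ hℓ₂
  obtain ⟨dm', hdm', hdmn, hℓdm⟩ :=
    exists_hasDerivWithinAt_polarParam_comp_Iic hInd hσ hτ_cont hστ hℓ₁ hℓ₂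
  obtain rfl := (uniqueDiffWithinAt_Ici 0).eq_deriv _ hdp hdp'
  obtain rfl := (uniqueDiffWithinAt_Iic 0).eq_deriv _ hdm hdm'
  have hr0 : (polarParam e₁ e₂ ∘ τ) 0 = e₁ := by
    rw [Function.comp_apply, eq_zero_of_leftInverse hστ hτ_cont.continuousAt
      (arclength_nonneg hσ fun _ ↦ norm_nonneg _) (arclength_nonpos hσ fun _ ↦ norm_nonneg _),
      polarParam_zero (mem_sphere_zero_iff_norm.1 he₁)]
  rw [hr0] at hjj
  have hdp_eq : dp = j • e₁ + (1 + jhat) • e₂ := by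
    rw [he₂]; linear_combination (norm := module) hjj
  have hdm_eq : dm = -j • e₁ + (1 - jhat) • e₂ := by
    rw [he₂]; linear_combination (norm := module) -hjj
  obtain ⟨h₁, h₂⟩ := tendsto_jump_quotients hbar (fun z hz ↦ by simpa [hz] using hdecomp z) hA₁ hℓ₁
    ((continuous_polarParam hInd).comp hτ_cont) (fun s ↦ norm_polarParam hInd _) hr0 hdp hdm
    hdpn hdmn hℓdp hℓdm
  simp only [hdp_eq, hdm_eq, map_add, map_smul, hA₁, hA₂, hℓ₁, hℓ₂, smul_eq_mul, mul_zero,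
    mul_one, zero_add, add_zero] at h₁ h₂ hℓdm
  refine ⟨h₁, ?_⟩
  convert h₂ using 2
  field_simp [hℓdm.ne']
  ring

/-- Let `X` be a strictly convex 2-dimensional real Banach space whose unit sphere has
exactly two non-smooth points `e₁` and `-e₁`, and let `r` be the natural parameterization
with `e₂ = r'±(0)`.  Then the radial and tangential jumps `j(0)`, `ĵ(0)` are determined by
the metric of the sphere:
`lim_{ε→0⁺} ‖r ε - r 0‖ / ‖(r ε)^ + r 0‖ = (1 - ĵ(0))/(1 + ĵ(0))` and
`lim_{ε→0⁺} (‖r ε - (r ε)^‖ - 2)/(2ε) = j(0)/(1 - ĵ(0))`,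
where `x^ = bar x` is the unique point with `{x, bar x} = S_X ∩ (x + ℝ·e₁)`. -/
theorem jumps_determined_by_metric
    {X : Type*} [NormedAddCommGroup X] [NormedSpace ℝ X] [CompleteSpace X]
    (hdim : Module.finrank ℝ X = 2)
    (hsc : StrictlyConvexSphere X)
    (e₁ e₂ : X) (hInd : LinearIndependent ℝ ![e₁, e₂])
    (he₁ : e₁ ∈ sphere (0 : X) 1)
    -- `e₁` and `-e₁` are the only non-smooth points of the sphere
    (hns : ∀ x ∈ sphere (0 : X) 1, ¬ IsSmoothPoint x ↔ (x = e₁ ∨ x = -e₁))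
    (p : ℝ → X)
    (hp : ∀ t, p t = ‖Real.cos t • e₁ + Real.sin t • e₂‖⁻¹ •
      (Real.cos t • e₁ + Real.sin t • e₂))
    (σ : ℝ → ℝ) (hσ : ∀ t, σ t = ∫ u in (0:ℝ)..t, ‖derivWithin p (Ici u) u‖)
    (τ : ℝ → ℝ) (hτ_cont : Continuous τ) (hτ_mono : StrictMono τ)
    (hστ : ∀ x, σ (τ x) = x)
    (r : ℝ → X) (hr : ∀ s, r s = p (τ s))
    -- the one-sided derivatives of `r` at `0`, with `e₂ = r'±(0)`
    (dm dp : X)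
    (hdm : HasDerivWithinAt r dm (Iic (0:ℝ)) 0) (hdp : HasDerivWithinAt r dp (Ici (0:ℝ)) 0)
    (he₂ : e₂ = (1/2 : ℝ) • (dp + dm))
    -- the radial jump `j` and tangential jump `ĵ` at `0`
    (j jhat : ℝ)
    (hjj : (1/2 : ℝ) • (dp - dm) = j • r 0 + jhat • ((1/2 : ℝ) • (dp + dm)))
    -- `bar x` is the unique point of the sphere with `{x, bar x} = S_X ∩ (x + ℝ·e₁)`
    (bar : X → X)
    (hbar : ∀ x ∈ sphere (0 : X) 1,
      ({x, bar x} : Set X) = sphere (0 : X) 1 ∩ {w : X | ∃ t : ℝ, w = x + t • e₁}) :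
    Tendsto (fun ε : ℝ => ‖r ε - r 0‖ / ‖bar (r ε) + r 0‖) (𝓝[>] 0)
      (𝓝 ((1 - jhat) / (1 + jhat))) ∧
    Tendsto (fun ε : ℝ => (‖r ε - bar (r ε)‖ - 2) / (2 * ε)) (𝓝[>] 0)
      (𝓝 (j / (1 - jhat))) :=
  jumps_determined_by_metric_general hdim e₁ e₂ hInd he₁ p hp σ hσ τ hτ_cont hστ r hr dm dp hdm hdp
    he₂ j jhat hjj bar hbar
end
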